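/- If c > 0 is a constant such that N(AB) ≤ c · N(A) · N(B) for every n ≥ 1 and all A, B ∈ M_n(ℂ) (that is, cN(·) is submultiplicative on M_n(ℂ) for every n), then c ≥ γ; in other words, γ = (2σ²+2μ²)^{1/2}/σ² is the smallest constant, independent of n, making a scalar multiple of N submultiplicative. -/

import Mathlib

open Matrix

/-- The Frobenius norm of a complex matrix. -/
noncomputable def frobNorm {n : ℕ} (A : Matrix (Fin n) (Fin n) ℂ) : ℝ :=
  Real.sqrt (∑ i, ∑ j, ‖A i j‖ ^ 2)

/-- The norm `N(Z) = ((1/2)σ²‖Z‖_F² + (1/2)μ²|tr Z|²)^(1/2)` on `M_n(ℂ)`. -/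
noncomputable def N2 (σ μ : ℝ) {n : ℕ} (Z : Matrix (Fin n) (Fin n) ℂ) : ℝ :=
  Real.sqrt ((1 / 2) * σ ^ 2 * frobNorm Z ^ 2 + (1 / 2) * μ ^ 2 * ‖Z.trace‖ ^ 2)

/-! The matrix units satisfy `E₀₁ E₁₀ = E₀₀`. The off-diagonal units are traceless, so
`N(E₀₁) = N(E₁₀) = σ/√2`, while `N(E₀₀) = √((σ² + μ²)/2)`; submultiplicativity of `cN` on this
product gives `√((σ² + μ²)/2) ≤ c σ²/2`, which is `γ ≤ c`. -/

section MatrixUnits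

variable {n : ℕ}

lemma frobNorm_single (i j : Fin n) (a : ℂ) : frobNorm (single i j a) = ‖a‖ := by
  have hsum : ∑ i', ∑ j', ‖single i j a i' j'‖ ^ 2 = ‖a‖ ^ 2 := by
    simp [single_apply, apply_ite (fun x : ℂ => ‖x‖ ^ 2), ite_and]
  rw [frobNorm, hsum, Real.sqrt_sq (norm_nonneg a)]

lemma N2_single_of_ne (σ μ : ℝ) {i j : Fin n} (h : i ≠ j) :
    N2 σ μ (single i j (1 : ℂ)) = √(σ ^ 2 / 2) := by
  rw [N2, frobNorm_single, trace_single_eq_of_ne _ _ _ h, norm_one, norm_zero]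
  congr 1
  ring

lemma N2_single_same (σ μ : ℝ) (i : Fin n) :
    N2 σ μ (single i i (1 : ℂ)) = √((σ ^ 2 + μ ^ 2) / 2) := by
  rw [N2, frobNorm_single, trace_single_eq_same, norm_one]
  congr 1
  ring

end MatrixUnits

theorem gamma_is_optimal_general (σ μ : ℝ) (hσ : 0 < σ)
    (γ : ℝ) (hγ : γ = Real.sqrt (2 * σ ^ 2 + 2 * μ ^ 2) / σ ^ 2)
    (c : ℝ)
    (hsub : ∀ n : ℕ, 1 ≤ n → ∀ A B : Matrix (Fin n) (Fin n) ℂ,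
      N2 σ μ (A * B) ≤ c * N2 σ μ A * N2 σ μ B) :
    γ ≤ c := by
  have h01 : (0 : Fin 2) ≠ 1 := by decide
  have hunits : √((σ ^ 2 + μ ^ 2) / 2) ≤ c * (σ ^ 2 / 2) := by
    have hsub₂ := hsub 2 (by norm_num) (single 0 1 1) (single 1 0 1)
    rwa [single_mul_single_same, one_mul, N2_single_same, N2_single_of_ne σ μ h01,
      N2_single_of_ne σ μ h01.symm, mul_assoc, Real.mul_self_sqrt (by positivity)] at hsub₂
  have hγ' : γ = 2 * √((σ ^ 2 + μ ^ 2) / 2) / σ ^ 2 := by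
    rw [hγ, show 2 * σ ^ 2 + 2 * μ ^ 2 = 2 ^ 2 * ((σ ^ 2 + μ ^ 2) / 2) by ring,
      Real.sqrt_mul' _ (by positivity), Real.sqrt_sq zero_le_two]
  rw [hγ', div_le_iff₀ (by positivity)]
  linarith

/-- If `c > 0` is such that `cN(·)` is submultiplicative on `M_n(ℂ)` for
every `n ≥ 1`, then `c ≥ γ = √(2σ²+2μ²)/σ²`; i.e. `γ` is the smallest constant,
independent of `n`, making a scalar multiple of `N` submultiplicative. -/
theorem gamma_is_optimal (σ μ : ℝ) (hσ : 0 < σ)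
    (γ : ℝ) (hγ : γ = Real.sqrt (2 * σ ^ 2 + 2 * μ ^ 2) / σ ^ 2)
    (c : ℝ) (hc : 0 < c)
    (hsub : ∀ n : ℕ, 1 ≤ n → ∀ A B : Matrix (Fin n) (Fin n) ℂ,
      N2 σ μ (A * B) ≤ c * N2 σ μ A * N2 σ μ B) :
    γ ≤ c :=
  gamma_is_optimal_general σ μ hσ γ hγ c hsub
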